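/- arXiv:2005.05637 — 4 statements merged into one kernel-verified Lean document; each statement's English description precedes it below -/
import Mathlib

section
/- Let Λ be an abelian group, C ⊆ Λ∖{0} a positive cone, and (τ,T,≤) a weak stability condition on C. Then for all n ≥ 1 and α_1,…,α_n ∈ C, the coefficient U(α_1,…,α_n;τ,τ) equals 1 if n = 1, and equals 0 if n ≥ 2. -/
/-!
Only the outer composition into singletons contributes to `U(α;τ,τ)`: for `m ≥ 2`,
`S(β₁,…,βₘ;τ,τ) = 0`, since at the last index `k` where `τ(β_k)` is maximal the cut before `k`
would have to be of type (a) and the cut after `k` of type (b), and the see-saw property of `τ`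
on partial sums makes these incompatible. What remains of the conditions on `τ` says that all
`τ(αⱼ)` agree, and then `U` is `∑ ((-1)^(l-1)/l) ∏ 1/kᵢ!` over the compositions `(k₁,…,k_l)` of
`n`, the `n`-th coefficient of `log(1 + (eˣ - 1)) = x`. For the latter, the truncated logarithm
`∑_{l ≤ n} ((-1)^(l-1)/l) (eˣ - 1)^l` has derivative `1 - (1 - eˣ)^n = 1 + O(xⁿ)`.
-/

/-- `(τ, T, ≤)` is a weak stability condition on the positive cone `C ⊆ Λ∖{0}`:
for all `α, γ ∈ C` (and `β = α + γ`), either `τ(α) ≤ τ(β) ≤ τ(γ)` or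
`τ(α) ≥ τ(β) ≥ τ(γ)`. -/
def WeakStability {Λ T : Type*} [AddCommMonoid Λ] [LinearOrder T]
    (C : Set Λ) (τ : Λ → T) : Prop :=
  ∀ a ∈ C, ∀ g ∈ C,
    (τ a ≤ τ (a + g) ∧ τ (a + g) ≤ τ g) ∨ (τ g ≤ τ (a + g) ∧ τ (a + g) ≤ τ a)

open scoped Classical in
/-- The wall-crossing coefficient `S(α₁,…,αₙ; τ, τ̃)` of Joyce, for the tuple
`α 0, …, α (n-1)`.  It is `(−1)^r` if for every cut `i = 1,…,n−1` either
(a) `τ(αᵢ) ≤ τ(α_{i+1})` and `τ̃(α₁+⋯+αᵢ) > τ̃(α_{i+1}+⋯+αₙ)`, or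
(b) `τ(αᵢ) > τ(α_{i+1})` and `τ̃(α₁+⋯+αᵢ) ≤ τ̃(α_{i+1}+⋯+αₙ)`,
where `r` is the number of cuts satisfying (a); otherwise it is `0`. -/
noncomputable def Scoef {Λ T T' : Type*} [AddCommMonoid Λ] [LinearOrder T] [LinearOrder T']
    (τ : Λ → T) (τ' : Λ → T') (n : ℕ) (α : ℕ → Λ) : ℤ :=
  if ∀ i ∈ Finset.Ico 1 n,
      (τ (α (i - 1)) ≤ τ (α i) ∧
        τ' (∑ j ∈ Finset.Ico i n, α j) < τ' (∑ j ∈ Finset.range i, α j)) ∨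
      (τ (α i) < τ (α (i - 1)) ∧
        τ' (∑ j ∈ Finset.range i, α j) ≤ τ' (∑ j ∈ Finset.Ico i n, α j))
  then (-1) ^ ((Finset.Ico 1 n).filter (fun i =>
      τ (α (i - 1)) ≤ τ (α i) ∧
        τ' (∑ j ∈ Finset.Ico i n, α j) < τ' (∑ j ∈ Finset.range i, α j))).card
  else 0

/-- Given a composition `c` of `n` and a tuple `α`, the tuple of sums of `α` over
the blocks of `c`. -/
def blockSum {Λ : Type*} [AddCommMonoid Λ] {n : ℕ} (α : ℕ → Λ) (c : Composition n) :
    ℕ → Λ :=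
  fun i => ∑ r ∈ Finset.Ico (c.sizeUpTo i) (c.sizeUpTo (i + 1)), α r

open scoped Classical in
/-- The wall-crossing coefficient `U(α₁,…,αₙ; τ, τ̃)` of Joyce, for the tuple
`α 0, …, α (n-1)`: the sum over `1 ≤ l ≤ m ≤ n` and subdivisions
`0 = a₀ < ⋯ < a_m = n` (a composition `c` of `n`) and `0 = b₀ < ⋯ < b_l = m`
(a composition `d` of `m = c.length`) such that, with `βᵢ` the block sums of `α`
under `c` and `γᵢ` the block sums of `β` under `d`, one has `τ(βᵢ) = τ(αⱼ)` for
all `j` in the `i`-th block and `τ̃(γᵢ) = τ̃(α₁+⋯+αₙ)` for all `i`, of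
`((−1)^{l−1}/l) · ∏ᵢ S(β-blocks; τ, τ̃) · ∏ᵢ 1/(aᵢ − a_{i−1})!`. -/
noncomputable def Ucoef {Λ T T' : Type*} [AddCommMonoid Λ] [LinearOrder T] [LinearOrder T']
    (τ : Λ → T) (τ' : Λ → T') (n : ℕ) (α : ℕ → Λ) : ℚ :=
  ∑ c : Composition n, ∑ d : Composition c.length,
    if (∀ i < c.length, ∀ j, c.sizeUpTo i ≤ j → j < c.sizeUpTo (i + 1) →
          τ (blockSum α c i) = τ (α j)) ∧
        (∀ i < d.length,
          τ' (blockSum (blockSum α c) d i) = τ' (∑ r ∈ Finset.range n, α r))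
    then ((-1 : ℚ) ^ (d.length - 1) / (d.length : ℚ))
      * (∏ i ∈ Finset.range d.length,
          ((Scoef τ τ' (d.sizeUpTo (i + 1) - d.sizeUpTo i)
            (fun t => blockSum α c (d.sizeUpTo i + t))) : ℚ))
      * (∏ i ∈ Finset.range c.length,
          (1 : ℚ) / ((c.sizeUpTo (i + 1) - c.sizeUpTo i).factorial : ℚ))
    else 0

open Finset PowerSeries

namespace Composition

variable {n : ℕ} (c : Composition n)

theorem lt_of_mem_Ico_sizeUpTo {i r : ℕ} (hr : r ∈ Ico (c.sizeUpTo i) (c.sizeUpTo (i + 1))) :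
    r < n :=
  (mem_Ico.mp hr).2.trans_le (c.sizeUpTo_le _)

theorem sizeUpTo_succ_sub {i : ℕ} (hi : i < c.length) :
    c.sizeUpTo (i + 1) - c.sizeUpTo i = c.blocks[i] := by
  rw [c.sizeUpTo_succ hi, Nat.add_sub_cancel_left]

theorem sizeUpTo_succ_sub_of_length_le {i : ℕ} (hi : c.length ≤ i) :
    c.sizeUpTo (i + 1) - c.sizeUpTo i = 0 := by
  rw [c.sizeUpTo_ofLength_le _ hi, c.sizeUpTo_ofLength_le _ (by omega), Nat.sub_self]

theorem sum_range_sizeUpTo_succ_sub :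
    ∑ i ∈ range c.length, (c.sizeUpTo (i + 1) - c.sizeUpTo i) = n := by
  rw [sum_range_tsub c.monotone_sizeUpTo, c.sizeUpTo_length, c.sizeUpTo_zero, Nat.sub_zero]

theorem exists_two_le_sizeUpTo_succ_sub_of_ne_ones (hc : c ≠ ones n) :
    ∃ i < c.length, 2 ≤ c.sizeUpTo (i + 1) - c.sizeUpTo i := by
  obtain ⟨b, hb, hb1⟩ := ne_ones_iff.mp hc
  obtain ⟨i, hi, rfl⟩ := List.getElem_of_mem hb
  exact ⟨i, hi, by rwa [c.sizeUpTo_succ_sub hi]⟩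

theorem ones_sizeUpTo_succ_sub {i : ℕ} (hi : i < n) :
    (ones n).sizeUpTo (i + 1) - (ones n).sizeUpTo i = 1 := by
  simp only [ones_sizeUpTo]
  omega

def ofFn (k : ℕ) (f : ℕ → ℕ) (hf : ∀ i < k, 0 < f i) (hsum : ∑ i ∈ range k, f i = n) :
    Composition n where
  blocks := List.ofFn fun i : Fin k => f i
  blocks_pos := by
    simp only [List.mem_ofFn, forall_exists_index]
    rintro _ i rfl
    exact hf i i.2
  blocks_sum := by rw [List.sum_ofFn, Fin.sum_univ_eq_sum_range (fun i => f i), hsum]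

@[simp]
theorem ofFn_length (k : ℕ) (f : ℕ → ℕ) (hf : ∀ i < k, 0 < f i) (hsum : ∑ i ∈ range k, f i = n) :
    (ofFn k f hf hsum).length = k := by
  simp [ofFn, length]

end Composition

theorem PowerSeries.coeff_pow_eq_sum_piAntidiag {R : Type*} [CommSemiring R] (F : R⟦X⟧)
    (n k : ℕ) :
    coeff n (F ^ k) = ∑ f ∈ piAntidiag (range k) n, ∏ i ∈ range k, coeff (f i) F := by
  rw [coeff_pow, finsuppAntidiag, sum_map, ← sum_attach (piAntidiag (range k) n)]
  rfl

theorem PowerSeries.coeff_pow_eq_sum_compositions {R : Type*} [CommSemiring R] (F : R⟦X⟧)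
    (hF : constantCoeff F = 0) (n k : ℕ) :
    coeff n (F ^ k) = ∑ c : Composition n with c.length = k,
      ∏ i ∈ range k, coeff (c.sizeUpTo (i + 1) - c.sizeUpTo i) F := by
  rw [coeff_pow_eq_sum_piAntidiag,
    ← sum_filter_of_ne (p := fun f => ∀ i ∈ range k, f i ≠ 0) fun f _ hne i hi hfi =>
      hne (prod_eq_zero hi (by rw [hfi, coeff_zero_eq_constantCoeff_apply, hF]))]
  symm
  refine sum_bij' (fun c _ i => c.sizeUpTo (i + 1) - c.sizeUpTo i)
    (fun f hf => Composition.ofFn k f ?_ ?_) ?_ ?_ ?_ ?_ ?_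
  · simp only [mem_filter, mem_piAntidiag, mem_range] at hf
    exact fun i hi => Nat.pos_of_ne_zero (hf.2 i hi)
  · exact (mem_piAntidiag.mp (mem_filter.mp hf).1).1
  · rintro c hc
    obtain rfl := (mem_filter.mp hc).2
    simp only [mem_filter, mem_piAntidiag, mem_range]
    refine ⟨⟨c.sum_range_sizeUpTo_succ_sub, fun i hi => ?_⟩, fun i hi => ?_⟩
    · by_contra h
      exact hi (c.sizeUpTo_succ_sub_of_length_le (not_lt.mp h))
    · have := c.sizeUpTo_strict_mono hi
      omega
  · intro f hf
    simp
  · intro c hc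
    obtain rfl := (mem_filter.mp hc).2
    ext1
    apply List.ext_getElem (by simp [Composition.ofFn])
    intro i h1 h2
    simp only [Composition.ofFn, List.getElem_ofFn]
    exact c.sizeUpTo_succ_sub h2
  · intro f hf
    simp only [mem_filter, mem_piAntidiag, mem_range] at hf
    funext i
    by_cases hi : i < k
    · rw [Composition.sizeUpTo_succ_sub _ (by simpa)]
      simp [Composition.ofFn]
    · rw [Composition.sizeUpTo_succ_sub_of_length_le _ (by simpa using hi)]
      exact (not_imp_comm.mp (hf.1.2 i) hi).symm
  · intro c hc
    obtain rfl := (mem_filter.mp hc).2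
    rfl

theorem sum_coeff_exp_sub_one_pow (n : ℕ) :
    ∑ k ∈ range (n + 1), (-1 : ℚ) ^ (k - 1) / k * coeff n ((exp ℚ - 1) ^ k)
      = if n = 1 then 1 else 0 := by
  -- the `k = 0` term vanishes through `x / 0 = 0`
  obtain _ | m := n
  · simp
  set E : ℚ⟦X⟧ := exp ℚ - 1
  set L : ℚ⟦X⟧ := ∑ k ∈ range (m + 2), C ((-1 : ℚ) ^ (k - 1) / k) * E ^ k
  have hL : coeff (m + 1) L
      = ∑ k ∈ range (m + 2), (-1 : ℚ) ^ (k - 1) / k * coeff (m + 1) (E ^ k) := by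
    simp [L, map_sum, coeff_C_mul]
  have hdE : d⁄dX ℚ E = 1 - -E := by simp [E, derivative_exp]
  have hdL : d⁄dX ℚ L = 1 - (-E) ^ (m + 1) := by
    rw [← geom_sum_mul_neg, ← hdE]
    simp only [L, sum_range_succ' _ (m + 1), map_add, map_sum, sum_mul, pow_zero, mul_one,
      derivative_C, add_zero]
    refine sum_congr rfl fun j _ => ?_
    have hr : C ((-1 : ℚ) ^ j / (j + 1 : ℕ)) * ((j + 1 : ℕ) : ℚ⟦X⟧) = C ((-1) ^ j) := by
      rw [← map_natCast C, ← map_mul, div_mul_cancel₀ _ (by positivity)]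
    rw [Derivation.leibniz, derivative_C, smul_zero, add_zero, derivative_pow, smul_eq_mul,
      Nat.add_sub_cancel, ← mul_assoc, ← mul_assoc, hr, neg_pow E, map_pow, map_neg, map_one]
  have hEpow : coeff m ((-E) ^ (m + 1)) = 0 := by
    refine X_pow_dvd_iff.mp (pow_dvd_pow_of_dvd (X_dvd_iff.mpr ?_) _) m m.lt_succ_self
    simp [E, constantCoeff_exp]
  have := coeff_derivative L m
  rw [hdL, map_sub, hEpow, coeff_one, hL] at this
  obtain _ | m := m
  · simpa using this.symm
  · simpa [(by positivity : (m : ℚ) + 1 + 1 ≠ 0)] using this.symm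

theorem sum_compositions_log_exp (n : ℕ) :
    ∑ c : Composition n, (-1 : ℚ) ^ (c.length - 1) / c.length *
      ∏ i ∈ range c.length, (1 : ℚ) / (c.sizeUpTo (i + 1) - c.sizeUpTo i).factorial
      = if n = 1 then 1 else 0 := by
  rw [← sum_coeff_exp_sub_one_pow, ← sum_fiberwise_of_maps_to (g := Composition.length)
    (t := range (n + 1)) fun c _ => mem_range.mpr (Nat.lt_succ_of_le c.length_le)]
  refine sum_congr rfl fun k _ => ?_
  rw [coeff_pow_eq_sum_compositions _ (by simp [constantCoeff_exp]), mul_sum]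
  refine sum_congr rfl fun c hc => ?_
  obtain rfl := (mem_filter.mp hc).2
  congr 1
  refine prod_congr rfl fun i hi => ?_
  have := c.sizeUpTo_strict_mono (mem_range.mp hi)
  rw [map_sub, coeff_exp, coeff_one, if_neg (by omega)]
  simp

theorem exists_last_argmax {T : Type*} [LinearOrder T] (f : ℕ → T) {m : ℕ} (hm : 0 < m) :
    ∃ k < m, (∀ j < m, f j ≤ f k) ∧ ∀ j, k < j → j < m → f j < f k := by
  obtain ⟨k, hk, hmax⟩ := (range m).exists_max_image (fun j => toLex (f j, j))
    (nonempty_range_iff.mpr hm.ne')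
  refine ⟨k, mem_range.mp hk, fun j hj => ?_, fun j hkj hj => ?_⟩ <;>
    rcases Prod.Lex.toLex_le_toLex.mp (hmax j (mem_range.mpr hj)) with h | ⟨h, h'⟩
  · exact h.le
  · exact h.le
  · exact h
  · omega

theorem sum_mem_of_add_mem {Λ ι : Type*} [AddCommMonoid Λ] {C : Set Λ}
    (hC : ∀ a ∈ C, ∀ b ∈ C, a + b ∈ C) {s : Finset ι} (hs : s.Nonempty) {f : ι → Λ}
    (hf : ∀ j ∈ s, f j ∈ C) : ∑ j ∈ s, f j ∈ C :=
  sum_induction_nonempty f (· ∈ C) (fun a b ha hb => hC a ha b hb) hs hf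

namespace WeakStability

variable {Λ T : Type*} [AddCommMonoid Λ] [LinearOrder T] {C : Set Λ} {τ : Λ → T}

theorem map_add_mem_uIcc (hτ : WeakStability C τ) {a g : Λ} (ha : a ∈ C) (hg : g ∈ C) :
    τ (a + g) ∈ Set.uIcc (τ a) (τ g) :=
  Set.mem_uIcc.mpr (hτ a ha g hg)

theorem map_sum_mem (hτ : WeakStability C τ) (hC : ∀ a ∈ C, ∀ b ∈ C, a + b ∈ C)
    {I : Set T} (hI : I.OrdConnected) {ι : Type*} {s : Finset ι} (hs : s.Nonempty)
    {f : ι → Λ} (hf : ∀ j ∈ s, f j ∈ C) (hfI : ∀ j ∈ s, τ (f j) ∈ I) :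
    τ (∑ j ∈ s, f j) ∈ I :=
  (sum_induction_nonempty f (fun x => x ∈ C ∧ τ x ∈ I)
    (fun a b ha hb => ⟨hC a ha.1 b hb.1,
      hI.uIcc_subset ha.2 hb.2 (hτ.map_add_mem_uIcc ha.1 hb.1)⟩)
    hs fun j hj => ⟨hf j hj, hfI j hj⟩).2

theorem Scoef_eq_zero (hτ : WeakStability C τ) (hC : ∀ a ∈ C, ∀ b ∈ C, a + b ∈ C)
    {m : ℕ} (hm : 2 ≤ m) {β : ℕ → Λ} (hβ : ∀ j < m, β j ∈ C) : Scoef τ τ m β = 0 := by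
  obtain ⟨k, hkm, hle, hlt⟩ := exists_last_argmax (τ ∘ β) (by omega : 0 < m)
  have hleft : ∀ i, 0 < i → i ≤ k + 1 →
      ∑ j ∈ range i, β j ∈ C ∧ τ (∑ j ∈ range i, β j) ≤ τ (β k) := by
    intro i hi hik
    have hs : (range i).Nonempty := nonempty_range_iff.mpr hi.ne'
    have hf : ∀ j ∈ range i, β j ∈ C := fun j hj => hβ j (by simp at hj; omega)
    exact ⟨sum_mem_of_add_mem hC hs hf,
      hτ.map_sum_mem hC Set.ordConnected_Iic hs hf fun j hj => hle j (by simp at hj; omega)⟩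
  have hright : ∀ i, k < i → i < m →
      ∑ j ∈ Ico i m, β j ∈ C ∧ τ (∑ j ∈ Ico i m, β j) < τ (β k) := by
    intro i hki him
    have hs : (Ico i m).Nonempty := nonempty_Ico.mpr him
    have hf : ∀ j ∈ Ico i m, β j ∈ C := fun j hj => hβ j (mem_Ico.mp hj).2
    exact ⟨sum_mem_of_add_mem hC hs hf, hτ.map_sum_mem hC Set.ordConnected_Iio hs hf
      fun j hj => hlt j (by simp at hj; omega) (mem_Ico.mp hj).2⟩
  rw [Scoef, if_neg]
  intro hcut
  have hcut_a : 0 < k → τ (∑ j ∈ Ico k m, β j) < τ (∑ j ∈ range k, β j) := fun hk => by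
    rcases hcut k (mem_Ico.mpr ⟨hk, hkm⟩) with ⟨_, h⟩ | ⟨h, _⟩
    · exact h
    · exact absurd (hle (k - 1) (by omega)) (not_le.mpr h)
  have hcut_b : k + 1 < m →
      τ (∑ j ∈ range (k + 1), β j) ≤ τ (∑ j ∈ Ico (k + 1) m, β j) := fun hk => by
    rcases hcut (k + 1) (mem_Ico.mpr ⟨by omega, hk⟩) with ⟨h, _⟩ | ⟨_, h⟩
    · rw [Nat.add_sub_cancel] at h
      exact absurd (hlt (k + 1) k.lt_succ_self hk) (not_lt.mpr h)
    · exact h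
  rcases Nat.eq_zero_or_pos k with rfl | hk
  · have h := hcut_b (by omega)
    rw [sum_range_one] at h
    exact lt_irrefl _ (h.trans_lt (hright 1 one_pos (by omega)).2)
  rcases (show k + 1 = m ∨ k + 1 < m by omega) with hkm' | hkm'
  · have h := hcut_a hk
    rw [← hkm', Nat.Ico_succ_singleton, sum_singleton] at h
    exact lt_irrefl _ (h.trans_le (hleft k hk k.le_succ).2)
  · obtain ⟨hlC, hlτ⟩ := hleft k hk k.le_succ
    obtain ⟨hrC, hrτ⟩ := hright (k + 1) k.lt_succ_self hkm'
    have hl : τ (∑ j ∈ range k, β j) ≤ τ (∑ j ∈ range (k + 1), β j) := by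
      rw [sum_range_succ]
      exact (Set.uIcc_of_le hlτ ▸ hτ.map_add_mem_uIcc hlC (hβ k hkm)).1
    have hr : τ (∑ j ∈ Ico (k + 1) m, β j) ≤ τ (∑ j ∈ Ico k m, β j) := by
      rw [sum_eq_sum_Ico_succ_bot hkm]
      exact (Set.uIcc_of_ge hrτ.le ▸ hτ.map_add_mem_uIcc (hβ k hkm) hrC).1
    exact lt_irrefl _ (((hl.trans (hcut_b hkm')).trans hr).trans_lt (hcut_a hk))

end WeakStability

theorem blockSum_ones {Λ : Type*} [AddCommMonoid Λ] (β : ℕ → Λ) {L i : ℕ} (hi : i < L) :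
    blockSum β (Composition.ones L) i = β i := by
  rw [blockSum, Composition.ones_sizeUpTo, Composition.ones_sizeUpTo, min_eq_left hi.le,
    min_eq_left hi, Nat.Ico_succ_singleton, sum_singleton]

theorem Scoef_one {Λ T T' : Type*} [AddCommMonoid Λ] [LinearOrder T] [LinearOrder T']
    (τ : Λ → T) (τ' : Λ → T') (β : ℕ → Λ) : Scoef τ τ' 1 β = 1 := by
  simp [Scoef]

section BlockSums

variable {Λ T : Type*} [AddCommMonoid Λ] [LinearOrder T] {C : Set Λ} {τ : Λ → T}
  {n : ℕ} {α : ℕ → Λ}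

theorem blockSum_mem (hC : ∀ a ∈ C, ∀ b ∈ C, a + b ∈ C) (hα : ∀ j < n, α j ∈ C)
    (c : Composition n) {i : ℕ} (hi : i < c.length) : blockSum α c i ∈ C :=
  sum_mem_of_add_mem hC (nonempty_Ico.mpr (c.sizeUpTo_strict_mono hi))
    fun _ hr => hα _ (c.lt_of_mem_Ico_sizeUpTo hr)

theorem WeakStability.map_blockSum (hτ : WeakStability C τ)
    (hC : ∀ a ∈ C, ∀ b ∈ C, a + b ∈ C) (hα : ∀ j < n, α j ∈ C) (c : Composition n)
    {i : ℕ} (hi : i < c.length) {t : T} (ht : ∀ j < n, τ (α j) = t) :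
    τ (blockSum α c i) = t :=
  hτ.map_sum_mem hC Set.ordConnected_singleton (nonempty_Ico.mpr (c.sizeUpTo_strict_mono hi))
    (fun _ hr => hα _ (c.lt_of_mem_Ico_sizeUpTo hr))
    fun _ hr => ht _ (c.lt_of_mem_Ico_sizeUpTo hr)

theorem WeakStability.forall_map_blockSum_eq_iff (hτ : WeakStability C τ)
    (hC : ∀ a ∈ C, ∀ b ∈ C, a + b ∈ C) (hα : ∀ j < n, α j ∈ C) (c : Composition n) (t : T) :
    ((∀ i < c.length, ∀ j, c.sizeUpTo i ≤ j → j < c.sizeUpTo (i + 1) →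
        τ (blockSum α c i) = τ (α j)) ∧ ∀ i < c.length, τ (blockSum α c i) = t) ↔
      ∀ j < n, τ (α j) = t := by
  constructor
  · rintro ⟨hblock, hsum⟩ j hj
    let i := c.index ⟨j, hj⟩
    have hji : j < c.sizeUpTo (i + 1) := by simpa using c.lt_sizeUpTo_index_succ ⟨j, hj⟩
    rw [← hblock i i.2 j (c.sizeUpTo_index_le _) hji, hsum i i.2]
  · intro ht
    refine ⟨fun i hi j _ hj => ?_, fun i hi => hτ.map_blockSum hC hα c hi ht⟩
    rw [hτ.map_blockSum hC hα c hi ht, ht j (hj.trans_le (c.sizeUpTo_le _))]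

theorem Ucoef_self_eq_sum (hτ : WeakStability C τ) (hC : ∀ a ∈ C, ∀ b ∈ C, a + b ∈ C)
    (hα : ∀ j < n, α j ∈ C) :
    Ucoef τ τ n α = ∑ c : Composition n,
      if ∀ j < n, τ (α j) = τ (∑ r ∈ range n, α r) then
        (-1 : ℚ) ^ (c.length - 1) / c.length *
          ∏ i ∈ range c.length, (1 : ℚ) / (c.sizeUpTo (i + 1) - c.sizeUpTo i).factorial
      else 0 := by
  refine sum_congr rfl fun c _ => ?_
  rw [sum_eq_single (Composition.ones c.length) (fun d _ hd => ?_)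
    fun h => (h (mem_univ _)).elim]
  · have hS : ∀ i ∈ range c.length, ((Scoef τ τ
        ((Composition.ones c.length).sizeUpTo (i + 1) - (Composition.ones c.length).sizeUpTo i)
        fun t => blockSum α c ((Composition.ones c.length).sizeUpTo i + t) : ℤ) : ℚ) = 1 := by
      intro i hi
      rw [Composition.ones_sizeUpTo_succ_sub (mem_range.mp hi), Scoef_one, Int.cast_one]
    have hones : (∀ i < c.length, τ (blockSum (blockSum α c) (Composition.ones c.length) i)
        = τ (∑ r ∈ range n, α r)) ↔ ∀ i < c.length, τ (blockSum α c i) = τ (∑ r ∈ range n, α r) :=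
      forall₂_congr fun i hi => by rw [blockSum_ones _ hi]
    rw [Composition.ones_length, prod_eq_one hS, mul_one]
    exact if_congr ((and_congr_right' hones).trans (hτ.forall_map_blockSum_eq_iff hC hα c _))
      rfl rfl
  · obtain ⟨i, hi, h2⟩ := d.exists_two_le_sizeUpTo_succ_sub_of_ne_ones hd
    have hS : Scoef τ τ (d.sizeUpTo (i + 1) - d.sizeUpTo i)
        (fun t => blockSum α c (d.sizeUpTo i + t)) = 0 :=
      hτ.Scoef_eq_zero hC h2 fun t ht =>
        blockSum_mem hC hα c (by have := d.sizeUpTo_le (i + 1); omega)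
    rw [prod_eq_zero (mem_range.mpr hi) (by rw [hS, Int.cast_zero]), mul_zero, zero_mul,
      ite_self]

end BlockSums

theorem Ucoef_self_general {Λ T : Type*} [AddCommMonoid Λ] [LinearOrder T]
    (C : Set Λ) (hCadd : ∀ a ∈ C, ∀ b ∈ C, a + b ∈ C)
    (τ : Λ → T) (hτ : WeakStability C τ)
    (n : ℕ) (α : ℕ → Λ) (hα : ∀ i < n, α i ∈ C) :
    Ucoef τ τ n α = if n = 1 then 1 else 0 := by
  rw [Ucoef_self_eq_sum hτ hCadd hα]
  by_cases h : ∀ j < n, τ (α j) = τ (∑ r ∈ range n, α r)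
  · simp only [if_pos h]
    exact sum_compositions_log_exp n
  · simp only [if_neg h, sum_const_zero]
    refine (if_neg ?_).symm
    rintro rfl
    exact h fun j hj => by rw [sum_range_one, Nat.lt_one_iff.mp hj]

/-- For a weak stability condition `(τ,T,≤)` on a positive cone
`C ⊆ Λ∖{0}`, and all `n ≥ 1` and `α₁,…,αₙ ∈ C`, the coefficient
`U(α₁,…,αₙ; τ, τ)` equals `1` if `n = 1` and `0` if `n ≥ 2`. -/
theorem Ucoef_self {Λ T : Type*} [AddCommMonoid Λ] [LinearOrder T]
    (C : Set Λ) (hCadd : ∀ a ∈ C, ∀ b ∈ C, a + b ∈ C) (hC0 : (0 : Λ) ∉ C)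
    (τ : Λ → T) (hτ : WeakStability C τ)
    (n : ℕ) (hn : 1 ≤ n) (α : ℕ → Λ) (hα : ∀ i < n, α i ∈ C) :
    Ucoef τ τ n α = if n = 1 then 1 else 0 :=
  Ucoef_self_general C hCadd τ hτ n α hα
end

section
/- Let Q be a quiver with no oriented cycles, μ an increasing slope function on the representations of Q defined by constants (μ_v)_{v∈Q_0}, and d ∈ ℕ^{Q_0}∖{0} such that d ≠ δ_v for every v ∈ Q_0 and there exists t ∈ ℝ with d(v) = 0 for all v ∈ Q_0 with μ_v ≠ t. Then every representation of Q with dimension vector d is μ-semistable, no representation with dimension vector d is μ-stable, and χ_Q(d,d) ≥ 2, so that 2 − 2χ_Q(d,d) < 0. -/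
/-- A quiver: a finite directed graph with vertex set `V`, edge set `E`, and
head and tail maps `h, t : E → V`. -/
structure QuiverData where
  V : Type
  E : Type
  [fV : Fintype V]
  [fE : Fintype E]
  [dV : DecidableEq V]
  [dE : DecidableEq E]
  h : E → V
  t : E → V

attribute [instance] QuiverData.fV QuiverData.fE QuiverData.dV QuiverData.dE

/-- `Q` has no oriented cycles: there is no nonempty cyclic sequence of edges
`e₀,…,eₙ` with `h(eᵢ) = t(e_{i+1})` cyclically. -/
def QuiverData.NoOrientedCycles (Q : QuiverData) : Prop :=
  ∀ (n : ℕ) (e : Fin (n + 1) → Q.E), ¬ (∀ i : Fin (n + 1), Q.h (e i) = Q.t (e (i + 1)))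

/-- A finite-dimensional complex representation of the quiver `Q`. -/
structure QRep (Q : QuiverData) where
  carrier : Q.V → Type
  [acg : ∀ v, AddCommGroup (carrier v)]
  [mod : ∀ v, Module ℂ (carrier v)]
  [fd : ∀ v, FiniteDimensional ℂ (carrier v)]
  edge : ∀ e : Q.E, carrier (Q.t e) →ₗ[ℂ] carrier (Q.h e)

attribute [instance] QRep.acg QRep.mod QRep.fd

/-- The dimension vector of a representation. -/
noncomputable def QRep.dimVec {Q : QuiverData} (X : QRep Q) : Q.V → ℕ :=
  fun v => Module.finrank ℂ (X.carrier v)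

/-- A subrepresentation of `X`: a family of subspaces preserved by all edge maps. -/
structure SubRep {Q : QuiverData} (X : QRep Q) where
  mem : ∀ v, Submodule ℂ (X.carrier v)
  stable : ∀ e : Q.E, (mem (Q.t e)).map (X.edge e) ≤ mem (Q.h e)

/-- The dimension vector of a subrepresentation. -/
noncomputable def SubRep.dimVec {Q : QuiverData} {X : QRep Q} (W : SubRep X) : Q.V → ℕ :=
  fun v => Module.finrank ℂ (W.mem v)

/-- The slope of a dimension vector `d` with respect to constants `μc`. -/
noncomputable def slopeFn {Q : QuiverData} (μc : Q.V → ℝ) (d : Q.V → ℕ) : ℝ :=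
  (∑ v, μc v * (d v : ℝ)) / (∑ v, (d v : ℝ))

/-- `X` is `μ`-semistable: `μ(dim E') ≤ μ(dim E − dim E')` for all subrepresentations
`E' ⊆ E` with `E' ≠ 0, E`. -/
def IsSemistable {Q : QuiverData} (μc : Q.V → ℝ) (X : QRep Q) : Prop :=
  ∀ W : SubRep X, (¬ ∀ v, W.mem v = ⊥) → (¬ ∀ v, W.mem v = ⊤) →
    slopeFn μc W.dimVec ≤ slopeFn μc (fun v => X.dimVec v - W.dimVec v)

/-- `X` is `μ`-stable: `μ(dim E') < μ(dim E − dim E')` for all subrepresentations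
`E' ⊆ E` with `E' ≠ 0, E`. -/
def IsStable {Q : QuiverData} (μc : Q.V → ℝ) (X : QRep Q) : Prop :=
  ∀ W : SubRep X, (¬ ∀ v, W.mem v = ⊥) → (¬ ∀ v, W.mem v = ⊤) →
    slopeFn μc W.dimVec < slopeFn μc (fun v => X.dimVec v - W.dimVec v)

/-- The slope function given by constants `μc` is increasing:
`μ_{t(a)} < μ_{h(a)}` for every edge `a`. -/
def IsIncreasing {Q : QuiverData} (μc : Q.V → ℝ) : Prop :=
  ∀ a : Q.E, μc (Q.t a) < μc (Q.h a)

/-- Two representations are isomorphic: there is a family of linear equivalences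
commuting with the edge maps. -/
def RepIso {Q : QuiverData} (X Y : QRep Q) : Prop :=
  ∃ φ : ∀ v, X.carrier v ≃ₗ[ℂ] Y.carrier v,
    ∀ (e : Q.E) (x : X.carrier (Q.t e)), φ (Q.h e) (X.edge e x) = Y.edge e (φ (Q.t e) x)

/-- The dimension vector `δ_v`. -/
def deltaVec (Q : QuiverData) (v : Q.V) : Q.V → ℕ :=
  fun w => if w = v then 1 else 0

/-- The Euler form of the quiver `Q`. -/
def eulerForm (Q : QuiverData) (d e : Q.V → ℤ) : ℤ :=
  ∑ v, d v * e v - ∑ a : Q.E, d (Q.t a) * e (Q.h a)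

/-!
Every nonzero subrepresentation and every nonzero quotient of a representation of dimension `d`
is supported where `μ = t`, hence has slope `t`; so all such representations are semistable.
An increasing slope function is strictly larger at the head of an arrow than at its tail, so no
arrow joins two vertices of the support of `d`. Hence all edge maps vanish and any family of
subspaces is a subrepresentation; as `d` is neither `0` nor a `δ_v`, a line in one nonzero space
is a nonzero proper one, so none is stable. The same observation kills the edge term of the
Euler form, giving `χ_Q(d,d) = ∑ d(v)² ≥ ∑ d(v) ≥ 2`.
-/

variable {Q : QuiverData}

theorem IsIncreasing.eq_zero_or_eq_zero {μc : Q.V → ℝ} (hμ : IsIncreasing μc) {M : Type*} [Zero M]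
    {t : ℝ} {d : Q.V → M} (hd : ∀ v, μc v ≠ t → d v = 0) (a : Q.E) :
    d (Q.t a) = 0 ∨ d (Q.h a) = 0 := by
  by_contra! h
  have := hμ a
  rw [not_imp_comm.mp (hd _) h.1, not_imp_comm.mp (hd _) h.2] at this
  exact lt_irrefl t this

theorem slopeFn_eq_of_support {μc : Q.V → ℝ} {t : ℝ} {f : Q.V → ℕ}
    (hf : ∀ v, μc v ≠ t → f v = 0) (hf0 : f ≠ 0) : slopeFn μc f = t := by
  obtain ⟨v, hv⟩ : ∃ v, f v ≠ 0 := Function.ne_iff.mp hf0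
  have hpos : 0 < ∑ w, (f w : ℝ) :=
    Finset.sum_pos' (fun w _ => by positivity)
      ⟨v, Finset.mem_univ v, by exact_mod_cast Nat.pos_of_ne_zero hv⟩
  have hnum : ∑ w, μc w * (f w : ℝ) = t * ∑ w, (f w : ℝ) := by
    rw [Finset.mul_sum]
    refine Finset.sum_congr rfl fun w _ => ?_
    by_cases hw : μc w = t
    · rw [hw]
    · simp [hf w hw]
  rw [slopeFn, hnum, mul_div_assoc, div_self hpos.ne', mul_one]

theorem two_le_sum_of_ne_deltaVec {d : Q.V → ℕ} (hd0 : d ≠ 0)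
    (hdelta : ∀ v, d ≠ deltaVec Q v) : 2 ≤ ∑ v, d v := by
  obtain ⟨v, hv⟩ : ∃ v, d v ≠ 0 := Function.ne_iff.mp hd0
  by_contra! hlt
  refine hdelta v (funext fun w => ?_)
  have hv_le : d v ≤ ∑ u, d u := Finset.single_le_sum (by simp) (Finset.mem_univ v)
  rcases eq_or_ne w v with rfl | hwv
  · simp only [deltaVec, if_true]
    omega
  · have hpair := Finset.sum_le_sum_of_subset (f := d) (Finset.subset_univ {w, v})
    rw [Finset.sum_pair hwv] at hpair
    simp only [deltaVec, hwv, if_false]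
    omega

theorem eulerForm_self_eq_sum_mul_self {d : Q.V → ℤ} (hd : ∀ a, d (Q.t a) * d (Q.h a) = 0) :
    eulerForm Q d d = ∑ v, d v * d v := by
  rw [eulerForm, Finset.sum_eq_zero fun a _ => hd a, sub_zero]

namespace QRep

variable (X : QRep Q)

theorem edge_eq_zero {e : Q.E} (he : X.dimVec (Q.t e) = 0 ∨ X.dimVec (Q.h e) = 0) :
    X.edge e = 0 := by
  rcases he with he | he <;>
  · have := Module.finrank_zero_iff.mp he
    exact Subsingleton.elim _ _

def subRepOfEdgeEqZero (hX : ∀ e, X.edge e = 0) (mem : ∀ v, Submodule ℂ (X.carrier v)) :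
    SubRep X where
  mem := mem
  stable e := by rw [hX e, Submodule.map_zero]; exact bot_le

theorem exists_subRep_ne_bot_ne_top (hX : ∀ e, X.edge e = 0) (h0 : X.dimVec ≠ 0)
    (hdelta : ∀ v, X.dimVec ≠ deltaVec Q v) :
    ∃ W : SubRep X, (¬ ∀ v, W.mem v = ⊥) ∧ (¬ ∀ v, W.mem v = ⊤) := by
  obtain ⟨v, hv⟩ : ∃ v, X.dimVec v ≠ 0 := Function.ne_iff.mp h0
  have : Nontrivial (X.carrier v) := Module.finrank_pos_iff.mp (Nat.pos_of_ne_zero hv)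
  obtain ⟨x, hx⟩ := exists_ne (0 : X.carrier v)
  let W := X.subRepOfEdgeEqZero hX (Function.update (fun _ => ⊥) v (ℂ ∙ x))
  have hWv : W.mem v = ℂ ∙ x := by
    simp only [W, subRepOfEdgeEqZero, Function.update_self]
  have hWne (u) (huv : u ≠ v) : W.mem u = ⊥ := by
    simp only [W, subRepOfEdgeEqZero, Function.update_of_ne huv]
  have hWdim : W.dimVec = deltaVec Q v := funext fun u => by
    rcases eq_or_ne u v with rfl | huv
    · simp only [SubRep.dimVec, deltaVec, if_true]
      rw [hWv, finrank_span_singleton hx]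
    · simp only [SubRep.dimVec, deltaVec, if_neg huv]
      rw [hWne u huv, finrank_bot]
  refine ⟨W, fun hbot => hx ?_, fun htop => hdelta v ?_⟩
  · rw [← Submodule.span_singleton_eq_bot (R := ℂ), ← hWv, hbot v]
  · rw [← hWdim]
    funext u
    simp only [QRep.dimVec, SubRep.dimVec]
    rw [htop u, finrank_top]

end QRep

namespace SubRep

variable {X : QRep Q} (W : SubRep X) {μc : Q.V → ℝ} {t : ℝ}

theorem dimVec_le (v : Q.V) : W.dimVec v ≤ X.dimVec v :=
  Submodule.finrank_le _

theorem slopeFn_dimVec_eq (hX : ∀ v, μc v ≠ t → X.dimVec v = 0) (hW : ¬ ∀ v, W.mem v = ⊥) :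
    slopeFn μc W.dimVec = t := by
  refine slopeFn_eq_of_support (fun v hv => Nat.eq_zero_of_le_zero (hX v hv ▸ W.dimVec_le v)) ?_
  push Not at hW
  obtain ⟨v, hv⟩ := hW
  exact Function.ne_iff.mpr ⟨v, fun h => hv (Submodule.finrank_eq_zero.mp h)⟩

theorem slopeFn_sub_dimVec_eq (hX : ∀ v, μc v ≠ t → X.dimVec v = 0) (hW : ¬ ∀ v, W.mem v = ⊤) :
    slopeFn μc (fun v => X.dimVec v - W.dimVec v) = t := by
  refine slopeFn_eq_of_support (fun v hv => by simp [hX v hv]) ?_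
  push Not at hW
  obtain ⟨v, hv⟩ := hW
  have : W.dimVec v < X.dimVec v := Submodule.finrank_lt hv
  exact Function.ne_iff.mpr ⟨v, by simp only [Pi.zero_apply]; omega⟩

end SubRep

section SingleSlope

variable {X : QRep Q} {μc : Q.V → ℝ} {t : ℝ}

theorem isSemistable_of_dimVec_support (hX : ∀ v, μc v ≠ t → X.dimVec v = 0) :
    IsSemistable μc X := fun W hW0 hW1 =>
  (W.slopeFn_dimVec_eq hX hW0).trans_le (W.slopeFn_sub_dimVec_eq hX hW1).ge

theorem not_isStable_of_dimVec_support (hX : ∀ v, μc v ≠ t → X.dimVec v = 0) (W : SubRep X)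
    (hW0 : ¬ ∀ v, W.mem v = ⊥) (hW1 : ¬ ∀ v, W.mem v = ⊤) : ¬ IsStable μc X := fun hs =>
  (hs W hW0 hW1).ne ((W.slopeFn_dimVec_eq hX hW0).trans (W.slopeFn_sub_dimVec_eq hX hW1).symm)

end SingleSlope

theorem semistable_not_stable_of_single_slope_value_general (Q : QuiverData)
    (μc : Q.V → ℝ) (hμ : IsIncreasing μc)
    (d : Q.V → ℕ) (hd0 : d ≠ 0) (hdelta : ∀ v : Q.V, d ≠ deltaVec Q v)
    (ht : ∃ t : ℝ, ∀ v : Q.V, μc v ≠ t → d v = 0) :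
    (∀ X : QRep Q, X.dimVec = d → IsSemistable μc X) ∧
    (∀ X : QRep Q, X.dimVec = d → ¬ IsStable μc X) ∧
    2 ≤ eulerForm Q (fun v => (d v : ℤ)) (fun v => (d v : ℤ)) ∧
    2 - 2 * eulerForm Q (fun v => (d v : ℤ)) (fun v => (d v : ℤ)) < 0 := by
  obtain ⟨t, ht⟩ := ht
  have hedge := hμ.eq_zero_or_eq_zero ht
  have heuler : 2 ≤ eulerForm Q (fun v => (d v : ℤ)) (fun v => (d v : ℤ)) := by
    rw [eulerForm_self_eq_sum_mul_self fun a => by rcases hedge a with h | h <;> simp [h]]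
    have hsum : ∑ v, d v ≤ ∑ v, d v * d v := Finset.sum_le_sum fun v _ => Nat.le_mul_self _
    exact_mod_cast (two_le_sum_of_ne_deltaVec hd0 hdelta).trans hsum
  refine ⟨fun X hX => isSemistable_of_dimVec_support (hX ▸ ht), fun X hX => ?_, heuler,
    by linarith⟩
  subst hX
  obtain ⟨W, hW0, hW1⟩ :=
    X.exists_subRep_ne_bot_ne_top (fun e => X.edge_eq_zero (hedge e)) hd0 hdelta
  exact not_isStable_of_dimVec_support ht W hW0 hW1

/-- Let `Q` have no oriented cycles and `μ` be an increasing slope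
function given by constants `μc`.  Let `d ≠ 0` with `d ≠ δ_v` for every `v`, and
suppose there is `t ∈ ℝ` with `d(v) = 0` whenever `μc v ≠ t`.  Then every
representation of dimension vector `d` is `μ`-semistable, none is `μ`-stable, and
`χ_Q(d,d) ≥ 2`, so that `2 − 2χ_Q(d,d) < 0`. -/
theorem semistable_not_stable_of_single_slope_value (Q : QuiverData)
    (hQ : Q.NoOrientedCycles) (μc : Q.V → ℝ) (hμ : IsIncreasing μc)
    (d : Q.V → ℕ) (hd0 : d ≠ 0) (hdelta : ∀ v : Q.V, d ≠ deltaVec Q v)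
    (ht : ∃ t : ℝ, ∀ v : Q.V, μc v ≠ t → d v = 0) :
    (∀ X : QRep Q, X.dimVec = d → IsSemistable μc X) ∧
    (∀ X : QRep Q, X.dimVec = d → ¬ IsStable μc X) ∧
    2 ≤ eulerForm Q (fun v => (d v : ℤ)) (fun v => (d v : ℤ)) ∧
    2 - 2 * eulerForm Q (fun v => (d v : ℤ)) (fun v => (d v : ℤ)) < 0 :=
  semistable_not_stable_of_single_slope_value_general Q μc hμ d hd0 hdelta ht
end

section
/- Let Q be a quiver with no oriented cycles, μ an increasing slope function on the representations of Q defined by constants (μ_v)_{v∈Q_0}, and d ∈ ℕ^{Q_0}∖{0} such that there exist v_1, v_2 ∈ Q_0 with d(v_1) > 0, d(v_2) > 0 and μ_{v_1} ≠ μ_{v_2} (equivalently, d is neither of the form δ_v nor supported on vertices with a single common value of μ_v). Then no representation of Q with dimension vector d is μ-semistable (and hence none is μ-stable). -/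
/-!
Pick `a, b` in the support of `d` with `μ_a < μ_b` and cut at `c = μ_b`: since `μ` increases
along edges, the vertices with `c ≤ μ_v` are closed under edges, so the representation that is
everything there and zero elsewhere is a subrepresentation. It contains `b`, so it is nonzero
of slope `≥ c`; its quotient contains `a` and lives on vertices of slope `< c`.
-/

namespace SubRep

variable {Q : QuiverData} {X : QRep Q}

theorem dimVec_eq_zero_of_forall_eq_bot {W : SubRep X} (h : ∀ v, W.mem v = ⊥) :
    W.dimVec = 0 := by
  funext v
  rw [SubRep.dimVec, h v, finrank_bot, Pi.zero_apply]

theorem dimVec_eq_of_forall_eq_top {W : SubRep X} (h : ∀ v, W.mem v = ⊤) :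
    W.dimVec = X.dimVec := by
  funext v
  rw [SubRep.dimVec, h v, finrank_top, QRep.dimVec]

def ofForwardClosed (X : QRep Q) (S : Finset Q.V) (hS : ∀ e, Q.t e ∈ S → Q.h e ∈ S) :
    SubRep X where
  mem v := if v ∈ S then ⊤ else ⊥
  stable e := by
    by_cases ht : Q.t e ∈ S
    · simp [hS e ht]
    · simp [ht]

variable {S : Finset Q.V} {hS : ∀ e, Q.t e ∈ S → Q.h e ∈ S}

theorem dimVec_ofForwardClosed (v : Q.V) :
    (ofForwardClosed X S hS).dimVec v = if v ∈ S then X.dimVec v else 0 := by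
  by_cases hv : v ∈ S
  · have hmem : (ofForwardClosed X S hS).mem v = ⊤ := if_pos hv
    rw [SubRep.dimVec, hmem, finrank_top, if_pos hv, QRep.dimVec]
  · have hmem : (ofForwardClosed X S hS).mem v = ⊥ := if_neg hv
    rw [SubRep.dimVec, hmem, finrank_bot, if_neg hv]

theorem dimVec_sub_dimVec_ofForwardClosed (v : Q.V) :
    X.dimVec v - (ofForwardClosed X S hS).dimVec v = if v ∈ S then 0 else X.dimVec v := by
  by_cases hv : v ∈ S <;> simp [dimVec_ofForwardClosed, hv]

end SubRep

section Slope

variable {Q : QuiverData} {μc : Q.V → ℝ} {d : Q.V → ℕ} {c : ℝ}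

theorem sum_natCast_pos_of_ne_zero (hd : d ≠ 0) : 0 < ∑ v, (d v : ℝ) := by
  obtain ⟨v, hv⟩ := Function.ne_iff.mp hd
  exact Finset.sum_pos' (fun _ _ => by positivity)
    ⟨v, Finset.mem_univ v, by exact_mod_cast Nat.pos_of_ne_zero hv⟩

theorem le_slopeFn (hd : d ≠ 0) (h : ∀ v, d v ≠ 0 → c ≤ μc v) : c ≤ slopeFn μc d := by
  rw [slopeFn, le_div_iff₀ (sum_natCast_pos_of_ne_zero hd), Finset.mul_sum]
  refine Finset.sum_le_sum fun v _ => ?_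
  by_cases hv : d v = 0
  · simp [hv]
  · exact mul_le_mul_of_nonneg_right (h v hv) (by positivity)

theorem slopeFn_lt (hd : d ≠ 0) (h : ∀ v, d v ≠ 0 → μc v < c) : slopeFn μc d < c := by
  rw [slopeFn, div_lt_iff₀ (sum_natCast_pos_of_ne_zero hd), Finset.mul_sum]
  obtain ⟨w, hw⟩ := Function.ne_iff.mp hd
  refine Finset.sum_lt_sum (fun v _ => ?_) ⟨w, Finset.mem_univ w, ?_⟩
  · by_cases hv : d v = 0
    · simp [hv]
    · exact mul_le_mul_of_nonneg_right (h v hv).le (by positivity)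
  · exact mul_lt_mul_of_pos_right (h w hw) (by exact_mod_cast Nat.pos_of_ne_zero hw)

end Slope

theorem IsStable.isSemistable {Q : QuiverData} {μc : Q.V → ℝ} {X : QRep Q}
    (h : IsStable μc X) : IsSemistable μc X :=
  fun W h0 htop => (h W h0 htop).le

theorem not_isSemistable_of_slopeFn_lt {Q : QuiverData} {μc : Q.V → ℝ} {X : QRep Q}
    (W : SubRep X) (h0 : W.dimVec ≠ 0) (htop : W.dimVec ≠ X.dimVec)
    (hlt : slopeFn μc (fun v => X.dimVec v - W.dimVec v) < slopeFn μc W.dimVec) :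
    ¬ IsSemistable μc X := fun hss =>
  (hss W (fun h => h0 (SubRep.dimVec_eq_zero_of_forall_eq_bot h))
    (fun h => htop (SubRep.dimVec_eq_of_forall_eq_top h))).not_gt hlt

theorem no_semistable_of_two_slope_values_general (Q : QuiverData)
    (μc : Q.V → ℝ) (hμ : IsIncreasing μc)
    (d : Q.V → ℕ)
    (hvv : ∃ v₁ v₂ : Q.V, 0 < d v₁ ∧ 0 < d v₂ ∧ μc v₁ ≠ μc v₂) :
    ∀ X : QRep Q, X.dimVec = d → ¬ IsSemistable μc X ∧ ¬ IsStable μc X := by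
  rintro X rfl
  obtain ⟨a, b, ha, hb, hab⟩ :
      ∃ a b, 0 < X.dimVec a ∧ 0 < X.dimVec b ∧ μc a < μc b := by
    obtain ⟨v₁, v₂, h₁, h₂, hne⟩ := hvv
    rcases hne.lt_or_gt with h | h
    exacts [⟨v₁, v₂, h₁, h₂, h⟩, ⟨v₂, v₁, h₂, h₁, h⟩]
  set S := Finset.univ.filter fun v => μc b ≤ μc v
  have hS : ∀ e, Q.t e ∈ S → Q.h e ∈ S := by
    simp only [S, Finset.mem_filter, Finset.mem_univ, true_and]
    exact fun e ht => ht.trans (hμ e).le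
  have hbS : b ∈ S := by simp [S]
  have haS : a ∉ S := by simpa [S] using hab
  set W := SubRep.ofForwardClosed X S hS
  have hW0 : W.dimVec ≠ 0 := Function.ne_iff.mpr
    ⟨b, by simpa [W, SubRep.dimVec_ofForwardClosed, hbS] using hb.ne'⟩
  have hquot0 : (fun v => X.dimVec v - W.dimVec v) ≠ 0 := Function.ne_iff.mpr
    ⟨a, by simpa [W, SubRep.dimVec_sub_dimVec_ofForwardClosed, haS] using ha.ne'⟩
  have hWtop : W.dimVec ≠ X.dimVec := fun h => hquot0 (by funext v; simp [h])
  have hslope : slopeFn μc (fun v => X.dimVec v - W.dimVec v) < slopeFn μc W.dimVec :=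
    calc _ < μc b := slopeFn_lt hquot0 fun v hv => by
            by_contra! hbv
            exact hv (by simp [W, SubRep.dimVec_sub_dimVec_ofForwardClosed, S, hbv])
      _ ≤ _ := le_slopeFn hW0 fun v hv => by
            by_contra! hvb
            exact hv (by simp [W, SubRep.dimVec_ofForwardClosed, S, hvb.not_ge])
  have hnss := not_isSemistable_of_slopeFn_lt W hW0 hWtop hslope
  exact ⟨hnss, fun hst => hnss hst.isSemistable⟩

/-- Let `Q` have no oriented cycles and `μ` be an increasing slope
function given by constants `μc`.  Let `d ≠ 0` be such that there exist vertices
`v₁, v₂` with `d v₁ > 0`, `d v₂ > 0` and `μc v₁ ≠ μc v₂`.  Then no representation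
of dimension vector `d` is `μ`-semistable (hence none is `μ`-stable). -/
theorem no_semistable_of_two_slope_values (Q : QuiverData)
    (hQ : Q.NoOrientedCycles) (μc : Q.V → ℝ) (hμ : IsIncreasing μc)
    (d : Q.V → ℕ) (hd0 : d ≠ 0)
    (hvv : ∃ v₁ v₂ : Q.V, 0 < d v₁ ∧ 0 < d v₂ ∧ μc v₁ ≠ μc v₂) :
    ∀ X : QRep Q, X.dimVec = d → ¬ IsSemistable μc X ∧ ¬ IsStable μc X :=
  no_semistable_of_two_slope_values_general Q μc hμ d hvv
end

section
/- Let Q, Q', Q'' be quivers, λ : Q → Q' and μ : Q' → Q'' morphisms of quivers, and (V,ρ) a finite-dimensional ℂ-representation of Q. Then the representations Σ_{μ∘λ}(V,ρ) and Σ_μ(Σ_λ(V,ρ)) of Q'' are isomorphic; in particular the induced maps on dimension vectors satisfy (μ∘λ)_* = μ_* ∘ λ_* : ℕ^{Q_0} → ℕ^{Q_0''}. -/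
/-- A morphism of quivers `λ : Q → Q'`: a map `f0` on vertices together with a
relation `f1 ⊆ Q₁ × Q₁'` on edges, satisfying conditions (i)–(iii) of
Definition 5.6 of the paper. -/
structure QMor (Q Q' : QuiverData) where
  f0 : Q.V → Q'.V
  f1 : Set (Q.E × Q'.E)
  compat : ∀ p ∈ f1, f0 (Q.h p.1) = Q'.h p.2 ∧ f0 (Q.t p.1) = Q'.t p.2
  lift : ∀ (v w : Q.V) (e' : Q'.E), f0 v = Q'.h e' → f0 w = Q'.t e' →
    ∃! e : Q.E, (e, e') ∈ f1 ∧ Q.h e = v ∧ Q.t e = w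
  inj : ∀ p ∈ f1, ∀ q ∈ f1, p.1 = q.1 → p.2 = q.2

/-- Composition of relations. -/
def relComp {A B C : Type*} (r : Set (A × B)) (s : Set (B × C)) : Set (A × C) :=
  {p | ∃ b, (p.1, b) ∈ r ∧ (b, p.2) ∈ s}

/-- The diagonal relation. -/
def diagRel (A : Type*) : Set (A × A) := {p | p.1 = p.2}

/-- Transport a fibre of a representation along an equality of vertices. -/
def lcast {Q : QuiverData} (X : QRep Q) {a b : Q.V} (h : a = b) :
    X.carrier a →ₗ[ℂ] X.carrier b := by
  subst h; exact LinearMap.id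

/-- The carrier of the pushforward representation `Σ_λ X`:
`(Σ_λ X)_{v'} = ⊕_{v : λ₀(v) = v'} X_v`, realised as a finite product. -/
abbrev pushCarrier {Q Q' : QuiverData} (l : QMor Q Q') (X : QRep Q) (v' : Q'.V) : Type :=
  ∀ v : {v : Q.V // l.f0 v = v'}, X.carrier v.1

open scoped Classical in
/-- The edge maps of the pushforward representation:
`(Σ_λ X)_{e'} = ∑_{e : (e,e') ∈ λ₁} ρ_e`. -/
noncomputable def pushEdge {Q Q' : QuiverData} (l : QMor Q Q') (X : QRep Q) (e' : Q'.E) :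
    pushCarrier l X (Q'.t e') →ₗ[ℂ] pushCarrier l X (Q'.h e') :=
  LinearMap.pi (fun w : {w : Q.V // l.f0 w = Q'.h e'} =>
    ∑ a : Q.E,
      if h : (a, e') ∈ l.f1 ∧ Q.h a = w.1 then
        (lcast X h.2) ∘ₗ (X.edge a) ∘ₗ
          (LinearMap.proj (⟨Q.t a, (l.compat (a, e') h.1).2⟩ : {v : Q.V // l.f0 v = Q'.t e'}))
      else 0)

/-- The pushforward representation `Σ_λ X` of `X` along a quiver morphism `λ`. -/
noncomputable def pushRep {Q Q' : QuiverData} (l : QMor Q Q') (X : QRep Q) : QRep Q' where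
  carrier := pushCarrier l X
  acg := fun _ => inferInstance
  mod := fun _ => inferInstance
  fd := fun _ => inferInstance
  edge := pushEdge l X

/-- The pushforward of dimension vectors along a quiver morphism. -/
noncomputable def pushDim {Q Q' : QuiverData} (l : QMor Q Q') (d : Q.V → ℕ) : Q'.V → ℕ :=
  fun v' => ∑ v ∈ Finset.univ.filter (fun v => l.f0 v = v'), d v

/-! At a vertex `v''` both representations are products of the spaces `X_v` over the `v` with
`μ₀ (λ₀ v) = v''`, only grouped differently, so reindexing gives the isomorphism. On an edge
`e''`, the iterated pushforward sums `ρ_a` over the pairs `(e', a)` with `(a, e') ∈ λ₁` and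
`(e', e'') ∈ μ₁`; by condition (iii) the edge `e'` is determined by `a`, so this is the sum over
the `a` with `(a, e'') ∈ (μ ∘ λ)₁`. -/

theorem Fintype.sum_dite_of_subsingleton {ι M : Type*} [Fintype ι] [AddCommMonoid M]
    {p : ι → Prop} [DecidablePred p] (hp : ∀ i j, p i → p j → i = j) {q : Prop} [Decidable q]
    (hpq : (∃ i, p i) ↔ q) (f : q → M) :
    ∑ i, (if h : p i then f (hpq.1 ⟨i, h⟩) else 0) = if h : q then f h else 0 := by
  by_cases hq : q
  · obtain ⟨i, hi⟩ := hpq.2 hq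
    rw [dif_pos hq, Finset.sum_eq_single i (fun j _ hji => dif_neg fun hj => hji (hp j i hj hi))
      (fun hi' => absurd (Finset.mem_univ i) hi'), dif_pos hi]
  · rw [dif_neg hq]
    exact Finset.sum_eq_zero fun i _ => dif_neg fun hi => hq (hpq.1 ⟨i, hi⟩)

section

variable {Q Q' Q'' : QuiverData} (l : QMor Q Q') (m : QMor Q' Q'') {c : QMor Q Q''}

open scoped Classical in
theorem pushEdge_apply (X : QRep Q) (e' : Q'.E)
    (x : pushCarrier l X (Q'.t e')) (w : {w : Q.V // l.f0 w = Q'.h e'}) :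
    pushEdge l X e' x w =
      ∑ a : Q.E,
        if h : (a, e') ∈ l.f1 ∧ Q.h a = w.1 then
          lcast X h.2 (X.edge a (x ⟨Q.t a, (l.compat (a, e') h.1).2⟩))
        else 0 := by
  rw [pushEdge, LinearMap.pi_apply, LinearMap.sum_apply]
  refine Finset.sum_congr rfl fun a _ => ?_
  split_ifs <;> rfl

theorem lcast_pushRep_apply (X : QRep Q) {a b : Q'.V}
    (h : a = b) (z : pushCarrier l X a) (w : {w : Q.V // l.f0 w = b}) :
    lcast (pushRep l X) h z w = z ⟨w.1, by rw [w.2, h]⟩ := by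
  subst h; rfl

open scoped Classical in
theorem pushEdge_pushRep_apply (X : QRep Q) (e'' : Q''.E)
    (y : pushCarrier m (pushRep l X) (Q''.t e'')) (w' : {w' : Q'.V // m.f0 w' = Q''.h e''})
    (w : {w : Q.V // l.f0 w = w'.1}) :
    pushEdge m (pushRep l X) e'' y w' w =
      ∑ e' : Q'.E, ∑ a : Q.E,
        if h : ((e', e'') ∈ m.f1 ∧ (a, e') ∈ l.f1) ∧ Q.h a = w.1 then
          lcast X h.2 (X.edge a
            (y ⟨Q'.t e', (m.compat _ h.1.1).2⟩ ⟨Q.t a, (l.compat _ h.1.2).2⟩))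
        else 0 := by
  erw [pushEdge_apply, Finset.sum_apply]
  refine Finset.sum_congr rfl fun e' _ => ?_
  by_cases hm : (e', e'') ∈ m.f1 ∧ Q'.h e' = w'.1
  · erw [dif_pos hm, lcast_pushRep_apply]
    refine (pushEdge_apply l X e' _ _).trans (Finset.sum_congr rfl fun a _ => ?_)
    by_cases hl : (a, e') ∈ l.f1 ∧ Q.h a = w.1
    · rw [dif_pos hl, dif_pos ⟨⟨hm.1, hl.1⟩, hl.2⟩]
    · rw [dif_neg hl, dif_neg fun h => hl ⟨h.1.2, h.2⟩]
  · erw [dif_neg hm, Pi.zero_apply]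
    refine (Finset.sum_eq_zero fun a _ => dif_neg ?_).symm
    rintro ⟨⟨hm', hl⟩, hh⟩
    -- `e'` lies over the head of `a`, so it ends at `w'`
    exact hm ⟨hm', by rw [← (l.compat _ hl).1, hh, w.2]⟩

def pushCarrierCompEquiv (hc0 : c.f0 = m.f0 ∘ l.f0) (X : QRep Q) (v'' : Q''.V) :
    pushCarrier c X v'' ≃ₗ[ℂ] pushCarrier m (pushRep l X) v'' where
  toFun x w' v := x ⟨v.1, by rw [hc0, Function.comp_apply, v.2, w'.2]⟩
  invFun y v := y ⟨l.f0 v.1, by rw [← Function.comp_apply (f := m.f0), ← hc0, v.2]⟩ ⟨v.1, rfl⟩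
  map_add' _ _ := rfl
  map_smul' _ _ := rfl
  left_inv _ := rfl
  right_inv y := by
    funext ⟨w', hw'⟩ ⟨v, hv⟩
    dsimp only at hv
    subst hv
    rfl

open scoped Classical in
theorem pushEdge_pushRep_pushCarrierCompEquiv (hc0 : c.f0 = m.f0 ∘ l.f0)
    (hc1 : c.f1 = relComp l.f1 m.f1) (X : QRep Q) (e'' : Q''.E) (x : pushCarrier c X (Q''.t e''))
    (w' : {w' : Q'.V // m.f0 w' = Q''.h e''}) (w : {w : Q.V // l.f0 w = w'.1}) :
    pushEdge m (pushRep l X) e'' (pushCarrierCompEquiv l m hc0 X _ x) w' w =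
      pushEdge c X e'' x ⟨w.1, by rw [hc0, Function.comp_apply, w.2, w'.2]⟩ := by
  rw [pushEdge_pushRep_apply, pushEdge_apply, Finset.sum_comm]
  refine Finset.sum_congr rfl fun a _ => ?_
  have hpq : (∃ e', ((e', e'') ∈ m.f1 ∧ (a, e') ∈ l.f1) ∧ Q.h a = w.1) ↔
      (a, e'') ∈ c.f1 ∧ Q.h a = w.1 := by
    rw [hc1]
    exact ⟨fun ⟨e', ⟨hm, hl⟩, hh⟩ => ⟨⟨e', hl, hm⟩, hh⟩, fun ⟨⟨e', hl, hm⟩, hh⟩ => ⟨e', ⟨hm, hl⟩, hh⟩⟩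
  exact Fintype.sum_dite_of_subsingleton
    (fun i j hi hj => l.inj (a, i) hi.1.2 (a, j) hj.1.2 rfl) hpq
    (fun h => lcast X h.2 (X.edge a (x ⟨Q.t a, (c.compat _ h.1).2⟩)))

theorem repIso_pushRep_comp (hc0 : c.f0 = m.f0 ∘ l.f0) (hc1 : c.f1 = relComp l.f1 m.f1)
    (X : QRep Q) : RepIso (pushRep c X) (pushRep m (pushRep l X)) :=
  ⟨pushCarrierCompEquiv l m hc0 X, fun e'' x => funext fun w' => funext fun w =>
    (pushEdge_pushRep_pushCarrierCompEquiv l m hc0 hc1 X e'' x w' w).symm⟩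

theorem pushDim_comp (hc0 : c.f0 = m.f0 ∘ l.f0) (d : Q.V → ℕ) :
    pushDim c d = pushDim m (pushDim l d) := by
  funext v''
  simp only [pushDim, hc0]
  rw [Finset.sum_fiberwise_eq_sum_filter]
  simp

end

/-- For quiver morphisms `λ : Q → Q'`, `μ : Q' → Q''` and a
representation `(V,ρ)` of `Q`, the representations `Σ_{μ∘λ}(V,ρ)` and
`Σ_μ(Σ_λ(V,ρ))` of `Q''` are isomorphic; in particular `(μ∘λ)_* = μ_* ∘ λ_*` on
dimension vectors.  (Here `c` is the composite morphism `μ∘λ`, which is determined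
by its data.) -/
theorem pushRep_comp (Q Q' Q'' : QuiverData) (l : QMor Q Q') (m : QMor Q' Q'')
    (c : QMor Q Q'') (hc0 : c.f0 = m.f0 ∘ l.f0)
    (hc1 : c.f1 = {p : Q.E × Q''.E | ∃ e' : Q'.E, (p.1, e') ∈ l.f1 ∧ (e', p.2) ∈ m.f1})
    (X : QRep Q) :
    RepIso (pushRep c X) (pushRep m (pushRep l X)) ∧
    ∀ d : Q.V → ℕ, pushDim c d = pushDim m (pushDim l d) :=
  ⟨repIso_pushRep_comp l m hc0 hc1 X, pushDim_comp l m hc0⟩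
end
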